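/- arXiv:2005.05772 — 4 statements merged into one kernel-verified Lean document; each statement's English description precedes it below -/
import Mathlib

section
/- Let $x_1 < x_2 < \dots < x_n$ be real numbers with $x_1 \geq 0$ and $n \geq 2$, let $q_1,\dots,q_n \in (0,1)$ with $\sum_k q_k = 1$, and let $\lambda > 0$. Then there exists a unique $x^* > x_n - \lambda$ satisfying $x^* = \lambda \sum_{k=1}^n \frac{q_k x_k}{\lambda + x^* - x_k}$. -/
/-!
With the poles shifted to `a k = x k - lam`, the right-hand side is `f t = ∑ k, c k / (t - a k)`
with `c k ≥ 0`. On `t > max a` it is continuous and antitone, so `t ↦ t - f t` is strictly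
increasing there; it tends to `-∞` at the largest pole (whose weight is positive) and is
eventually positive, so it has exactly one zero.
-/

open Filter Topology Set Finset

theorem existsUnique_gt_and_eq_of_antitoneOn {f : ℝ → ℝ} {a : ℝ}
    (hanti : AntitoneOn f (Ioi a)) (hcont : ContinuousOn f (Ioi a))
    (hlim : Tendsto f (𝓝[>] a) atTop) :
    ∃! t, a < t ∧ t = f t := by
  obtain ⟨u, hfu, hua, hu1⟩ :
      ∃ u, a + 1 < f u ∧ u ∈ Ioo a (a + 1) :=
    ((hlim.eventually_gt_atTop (a + 1)).and (Ioo_mem_nhdsGT (lt_add_one a))).exists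
  set v := max u (f u)
  have huv : u ≤ v := le_max_left _ _
  have hfv : f v ≤ v := (hanti hua (hua.trans_le huv) huv).trans (le_max_right _ _)
  have hsub : Icc u v ⊆ Ioi a := fun t ht => hua.trans_le ht.1
  obtain ⟨t, ht, hft⟩ : ∃ t ∈ Icc u v, t - f t = 0 :=
    intermediate_value_Icc huv ((continuousOn_id.sub hcont).mono hsub)
      ⟨by dsimp; linarith, by dsimp; linarith⟩
  refine ⟨t, ⟨hsub ht, by linarith⟩, fun s ⟨hs, hfs⟩ => ?_⟩
  -- `t ↦ t - f t` is strictly increasing, so it has at most one zero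
  rcases lt_trichotomy s t with hst | rfl | hts
  · linarith [hanti hs (hsub ht) hst.le]
  · rfl
  · linarith [hanti (hsub ht) hs hts.le]

section SumDivSub

variable {ι : Type*} [Fintype ι] {c a : ι → ℝ} {b : ℝ}

theorem antitoneOn_sum_div_sub (hc : ∀ k, 0 ≤ c k) (ha : ∀ k, a k ≤ b) :
    AntitoneOn (fun t => ∑ k, c k / (t - a k)) (Ioi b) := fun s hs t _ hst =>
  sum_le_sum fun k _ =>
    div_le_div_of_nonneg_left (hc k) (sub_pos.2 ((ha k).trans_lt hs)) (by linarith)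

theorem continuousOn_sum_div_sub (ha : ∀ k, a k ≤ b) :
    ContinuousOn (fun t => ∑ k, c k / (t - a k)) (Ioi b) :=
  continuousOn_finsetSum _ fun k _ =>
    continuousOn_const.div (continuousOn_id.sub continuousOn_const)
      fun _ ht => (sub_pos.2 ((ha k).trans_lt ht)).ne'

theorem tendsto_sum_div_sub_nhdsGT (hc : ∀ k, 0 ≤ c k) {j : ι} (hcj : 0 < c j)
    (ha : ∀ k, a k ≤ a j) :
    Tendsto (fun t => ∑ k, c k / (t - a k)) (𝓝[>] (a j)) atTop := by
  have hj : Tendsto (fun t => c j / (t - a j)) (𝓝[>] (a j)) atTop := by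
    have hsub : Tendsto (fun t => t - a j) (𝓝[>] (a j)) (𝓝[>] 0) :=
      tendsto_nhdsWithin_iff.2
        ⟨tendsto_nhdsWithin_of_tendsto_nhds
            (by simpa using (continuous_sub_right (a j)).tendsto (a j)),
          eventually_nhdsWithin_of_forall fun _ ht => mem_Ioi.2 (sub_pos.2 ht)⟩
    simpa only [div_eq_mul_inv, Pi.inv_apply] using hsub.inv_tendsto_nhdsGT_zero.const_mul_atTop hcj
  refine tendsto_atTop_mono' _ ?_ hj
  filter_upwards [self_mem_nhdsWithin] with t ht
  exact single_le_sum (f := fun k => c k / (t - a k))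
    (fun k _ => div_nonneg (hc k) (sub_pos.2 ((ha k).trans_lt ht)).le) (mem_univ j)

end SumDivSub

/-- Existence and uniqueness of the heritable-risk growth rate fixed point. -/
theorem stmt_0 (n : ℕ) (hn : 2 ≤ n) (x q : Fin n → ℝ)
    (hx : StrictMono x) (hx0 : 0 ≤ x ⟨0, by omega⟩)
    (hq : ∀ k, q k ∈ Set.Ioo (0 : ℝ) 1)
    (lam : ℝ) (hlam : 0 < lam) :
    ∃! xs : ℝ, xs > x ⟨n - 1, by omega⟩ - lam ∧
      xs = lam * ∑ k, q k * x k / (lam + xs - x k) := by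
  set m : Fin n := ⟨n - 1, by omega⟩
  have hxm : ∀ k, x k ≤ x m := fun k => hx.monotone (Fin.le_def.2 (by simp [m]; omega))
  have hx_nonneg : ∀ k, 0 ≤ x k := fun k =>
    hx0.trans (hx.monotone (Fin.le_def.2 (Nat.zero_le _)))
  have hxm_pos : 0 < x m := hx0.trans_lt (hx (Fin.lt_def.2 (by simp [m]; omega)))
  have hc : ∀ k, 0 ≤ lam * q k * x k := fun k =>
    mul_nonneg (mul_nonneg hlam.le (hq k).1.le) (hx_nonneg k)
  have ha : ∀ k, x k - lam ≤ x m - lam := fun k => sub_le_sub_right (hxm k) lam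
  have hf : (fun t => lam * ∑ k, q k * x k / (lam + t - x k)) =
      fun t => ∑ k, lam * q k * x k / (t - (x k - lam)) := by
    ext t
    rw [mul_sum]
    congr! 1 with k
    ring
  exact existsUnique_gt_and_eq_of_antitoneOn (hf ▸ antitoneOn_sum_div_sub hc ha)
    (hf ▸ continuousOn_sum_div_sub ha)
    (hf ▸ tendsto_sum_div_sub_nhdsGT hc (mul_pos (mul_pos hlam (hq m).1) hxm_pos) ha)
end

section
/- Let $(x_k, q_k)_{k=1}^n$ and $(x'_j, q'_j)_{j=1}^{n'}$ be two finitely supported probability distributions on $[0,\infty)$ with at least two support points each, such that $(x', q')$ is a strict mean-preserving spread of $(x, q)$ (i.e., they have equal mean and $\mathbb{E}[\phi(x')] > \mathbb{E}[\phi(x)]$ for every strictly convex function $\phi$). Let $\lambda > 0$ and let $x^*$ (resp. $x^{*\prime}$) denote the unique solution in $(\max_k x_k - \lambda, \max_k x_k)$ (resp. the corresponding interval for $x'$) of the equation $x = \lambda \sum_k \frac{q_k x_k}{\lambda + x - x_k}$ (resp. with primed quantities). Then $x^{*\prime} > x^*$. -/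
/-!
Suppose `xs' ≤ xs` and put `c = λ + xs`. Every support point of either distribution lies below
`c`, and `λ c / (c - t) = λ + λ t / (c - t)`, so the fixed-point equation says that the expectation
of `φ t = λ c / (c - t)` under `q` is `λ + xs`. Extending `φ` past the support by its second-order
Taylor polynomial gives a strictly convex function on `ℝ`, so its expectation under `q'` is strictly
larger. But `t / (c - t)` only grows when `c` shrinks to `λ + xs'`, so that expectation is at most
`λ + xs'`, a contradiction.
-/

open Set Finset Filter

section Gluing

variable {f g f' g' : ℝ → ℝ} {d : ℝ}

theorem HasDerivAt.ite_le (hf : ∀ t ≤ d, HasDerivAt f (f' t) t)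
    (hg : ∀ t, d ≤ t → HasDerivAt g (g' t) t) (hfg : f d = g d) (hfg' : f' d = g' d) (t : ℝ) :
    HasDerivAt (fun s ↦ if s ≤ d then f s else g s) (if t ≤ d then f' t else g' t) t := by
  rcases lt_trichotomy t d with h | rfl | h
  · rw [if_pos h.le]
    refine (hf t h.le).congr_of_eventuallyEq ?_
    filter_upwards [Iio_mem_nhds h] with s hs
    rw [if_pos hs.le]
  · rw [if_pos le_rfl]
    have hleft : HasDerivWithinAt (fun s ↦ if s ≤ t then f s else g s) (f' t) (Iic t) t :=
      (hf t le_rfl).hasDerivWithinAt.congr (fun s hs ↦ if_pos hs) (if_pos le_rfl)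
    have hright : HasDerivWithinAt (fun s ↦ if s ≤ t then f s else g s) (f' t) (Ici t) t := by
      rw [hfg']
      refine (hg t le_rfl).hasDerivWithinAt.congr (fun s hs ↦ ?_) (by rw [if_pos le_rfl, hfg])
      split_ifs with hst
      · rw [le_antisymm hst hs, hfg]
      · rfl
    simpa only [Iic_union_Ici, hasDerivWithinAt_univ] using hleft.union hright
  · rw [if_neg h.not_ge]
    refine (hg t h.le).congr_of_eventuallyEq ?_
    filter_upwards [Ioi_mem_nhds h] with s hs
    rw [if_neg hs.not_ge]

theorem strictConvexOn_univ_ite_le (hf : ∀ t ≤ d, HasDerivAt f (f' t) t)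
    (hg : ∀ t, d ≤ t → HasDerivAt g (g' t) t) (hfg : f d = g d) (hfg' : f' d = g' d)
    (hf' : StrictMonoOn f' (Iic d)) (hg' : StrictMonoOn g' (Ici d)) :
    StrictConvexOn ℝ univ (fun s ↦ if s ≤ d then f s else g s) := by
  have hderiv := HasDerivAt.ite_le hf hg hfg hfg'
  refine StrictMono.strictConvexOn_univ_of_deriv
    (continuous_iff_continuousAt.2 fun t ↦ (hderiv t).continuousAt) ?_
  rw [show deriv _ = _ from funext fun t ↦ (hderiv t).deriv]
  refine StrictMonoOn.Iic_union_Ici (hf'.congr fun s hs ↦ (if_pos hs).symm)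
    (hg'.congr fun s hs ↦ ?_)
  split_ifs with hsd
  · rw [le_antisymm hsd hs, hfg']
  · rfl

end Gluing

noncomputable def reciprocalExt (A c d t : ℝ) : ℝ :=
  if t ≤ d then A / (c - t)
  else A / (c - d) + A / (c - d) ^ 2 * (t - d) + A / (c - d) ^ 3 * (t - d) ^ 2

theorem strictConvexOn_reciprocalExt {A c d : ℝ} (hA : 0 < A) (hdc : d < c) :
    StrictConvexOn ℝ univ (reciprocalExt A c d) := by
  refine strictConvexOn_univ_ite_le (f' := fun t ↦ A / (c - t) ^ 2)
    (g' := fun t ↦ A / (c - d) ^ 2 + 2 * (A / (c - d) ^ 3) * (t - d)) (fun t ht ↦ ?_)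
    (fun t _ ↦ ?_) (by simp) (by simp) ?_ ?_
  · have hne : c - t ≠ 0 := by linarith
    have h := (((hasDerivAt_id' (x := t)).const_sub c).fun_inv hne).const_mul A
    exact (h.congr_deriv (by ring)).congr_of_eventuallyEq
      (Eventually.of_forall fun s ↦ by ring)
  · have hlin := (hasDerivAt_id' (x := t)).sub_const d
    have h := ((hlin.const_mul (A / (c - d) ^ 2)).fun_add
      ((hlin.fun_pow 2).const_mul (A / (c - d) ^ 3))).const_add (A / (c - d))
    exact (h.congr_deriv (by ring)).congr_of_eventuallyEq
      (Eventually.of_forall fun s ↦ by ring)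
  · intro a _ b hb hab
    simp only
    have : 0 < c - b := by linarith [mem_Iic.1 hb]
    gcongr
  · intro a _ b _ hab
    simp only
    gcongr

theorem sum_mul_reciprocalExt {ι : Type*} [Fintype ι] {q x : ι → ℝ} {c d : ℝ} (lam : ℝ)
    (hq : ∑ i, q i = 1) (hx : ∀ i, x i ≤ d) (hdc : d < c) :
    ∑ i, q i * reciprocalExt (lam * c) c d (x i) = lam + lam * ∑ i, q i * x i / (c - x i) := by
  have hterm (i : ι) :
      q i * reciprocalExt (lam * c) c d (x i) = q i * lam + lam * (q i * x i / (c - x i)) := by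
    have : c - x i ≠ 0 := by linarith [hx i]
    rw [reciprocalExt, if_pos (hx i)]
    field_simp
    ring
  simp only [hterm, sum_add_distrib, ← sum_mul, ← mul_sum, hq, one_mul]

theorem Monotone.apply_le_apply_sub_one {α : Type*} [Preorder α] {n : ℕ} {x : Fin n → α}
    (hx : Monotone x) (h : n - 1 < n) (k : Fin n) : x k ≤ x ⟨n - 1, h⟩ :=
  hx (Fin.le_def.2 (by simp only; omega))

/-- A strict mean-preserving spread strictly increases the heritable-risk growth rate. -/
theorem stmt_4 (n n' : ℕ) (hn : 2 ≤ n) (hn' : 2 ≤ n')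
    (x q : Fin n → ℝ) (x' q' : Fin n' → ℝ)
    (hx : StrictMono x) (hx' : StrictMono x')
    (hx0 : ∀ k, 0 ≤ x k) (hx0' : ∀ j, 0 ≤ x' j)
    (hq' : ∀ j, q' j ∈ Set.Ioo (0 : ℝ) 1)
    (hqsum : ∑ k, q k = 1) (hqsum' : ∑ j, q' j = 1)
    (hmps : ∀ φ : ℝ → ℝ, StrictConvexOn ℝ Set.univ φ →
      ∑ j, q' j * φ (x' j) > ∑ k, q k * φ (x k))
    (lam : ℝ) (hlam : 0 < lam) (xs xs' : ℝ)
    (hxs : xs ∈ Set.Ioo (x ⟨n - 1, by omega⟩ - lam) (x ⟨n - 1, by omega⟩))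
    (heq : xs = lam * ∑ k, q k * x k / (lam + xs - x k))
    (hxs' : xs' ∈ Set.Ioo (x' ⟨n' - 1, by omega⟩ - lam) (x' ⟨n' - 1, by omega⟩))
    (heq' : xs' = lam * ∑ j, q' j * x' j / (lam + xs' - x' j)) :
    xs' > xs := by
  by_contra! hle
  set M := x ⟨n - 1, by omega⟩
  set M' := x' ⟨n' - 1, by omega⟩
  have hxM (k : Fin n) : x k ≤ max M M' :=
    (hx.monotone.apply_le_apply_sub_one _ k).trans (le_max_left _ _)
  have hxM' (j : Fin n') : x' j ≤ max M M' :=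
    (hx'.monotone.apply_le_apply_sub_one _ j).trans (le_max_right _ _)
  have hMc : max M M' < lam + xs := max_lt (by linarith [hxs.1]) (by linarith [hxs'.1])
  have hc : 0 < lam + xs := by linarith [hx0 ⟨n - 1, by omega⟩, hxs.1]
  have hspread := hmps _ (strictConvexOn_reciprocalExt (mul_pos hlam hc) hMc)
  rw [sum_mul_reciprocalExt lam hqsum hxM hMc, sum_mul_reciprocalExt lam hqsum' hxM' hMc,
    ← heq] at hspread
  have hmono :
      ∑ j, q' j * x' j / (lam + xs - x' j) ≤ ∑ j, q' j * x' j / (lam + xs' - x' j) := by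
    gcongr with j
    · exact mul_nonneg (hq' j).1.le (hx0' j)
    · linarith [hxs'.1, hx'.monotone.apply_le_apply_sub_one (by omega) j]
  have := mul_le_mul_of_nonneg_left hmono hlam.le
  linarith
end

section
/- In the binary case, let $x_\ell < x_h$ with $x_\ell \geq 0$, let $q \in (0,1)$ be the probability of $x_h$, write $\Delta x = x_h - x_\ell$ and $\mu = q x_h + (1-q) x_\ell$, and let $\lambda > 0$. Then the unique solution $x^* \in (x_h - \lambda, x_h)$ of $x^* = \lambda\left(\frac{q x_h}{\lambda + x^* - x_h} + \frac{(1-q) x_\ell}{\lambda + x^* - x_\ell}\right)$ is given explicitly by $x^* = \mu + \frac{\Delta x (1 - 2q) - \lambda + \sqrt{(\Delta x - \lambda)^2 + 4 q \Delta x \lambda}}{2}$. -/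
/-!
Clearing denominators, the fixed-point equation becomes a cubic in `x*` with the factor `x* + λ`,
which is positive on the interval. The other factor says `t (λ + x* - x_h) = q λ Δx` for
`t = x* - x_ℓ` (the paper's `p Δx`); as `λ + x* - x_h > 0` this forces `t > 0`, which singles out
the larger root of the quadratic.
-/

lemma eq_neg_add_sqrt_of_sq_add_mul_add_eq_zero {b c t : ℝ} (h : t ^ 2 + b * t + c = 0)
    (ht : 0 ≤ 2 * t + b) : t = (-b + √(b ^ 2 - 4 * c)) / 2 := by
  have hdiscrim : b ^ 2 - 4 * c = (2 * t + b) ^ 2 := by linear_combination -4 * h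
  rw [hdiscrim, Real.sqrt_sq ht]
  ring

lemma sub_mul_eq_of_eq_fixedPoint {xl xh q lam xs : ℝ} (hh : 0 < lam + xs - xh)
    (hl : 0 < lam + xs - xl) (hne : xs + lam ≠ 0)
    (heq : xs = lam * (q * xh / (lam + xs - xh) + (1 - q) * xl / (lam + xs - xl))) :
    (xs - xl) * (lam + xs - xh) = q * lam * (xh - xl) := by
  have hcubic : xs * (lam + xs - xh) * (lam + xs - xl)
      = lam * (q * xh * (lam + xs - xl) + (1 - q) * xl * (lam + xs - xh)) := by
    field_simp at heq
    linear_combination heq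
  have hfactor : ((xs - xl) * (lam + xs - xh) - q * lam * (xh - xl)) * (xs + lam) = 0 := by
    linear_combination hcubic
  exact sub_eq_zero.mp ((mul_eq_zero.mp hfactor).resolve_right hne)

/-- Explicit formula for the heritable-risk growth rate with a binary lottery. -/
theorem stmt_8 (xl xh : ℝ) (hxl : 0 ≤ xl) (hlt : xl < xh)
    (q : ℝ) (hq : q ∈ Set.Ioo (0 : ℝ) 1) (lam : ℝ) (hlam : 0 < lam)
    (xs : ℝ) (hmem : xs ∈ Set.Ioo (xh - lam) xh)
    (heq : xs = lam * (q * xh / (lam + xs - xh) + (1 - q) * xl / (lam + xs - xl))) :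
    xs = (q * xh + (1 - q) * xl) +
      ((xh - xl) * (1 - 2 * q) - lam +
        Real.sqrt (((xh - xl) - lam) ^ 2 + 4 * q * (xh - xl) * lam)) / 2 := by
  have hh : 0 < lam + xs - xh := by linarith [hmem.1]
  have hl : 0 < lam + xs - xl := by linarith
  have hprod := sub_mul_eq_of_eq_fixedPoint hh hl (by linarith) heq
  have hqd : 0 < q * lam * (xh - xl) := by have := hq.1; have := sub_pos.2 hlt; positivity
  have ht : 0 < xs - xl := pos_of_mul_pos_left (hprod ▸ hqd) hh.le
  have hroot := eq_neg_add_sqrt_of_sq_add_mul_add_eq_zero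
    (t := xs - xl) (b := lam - (xh - xl)) (c := -(q * lam * (xh - xl)))
    (by linear_combination hprod) (by linarith)
  have hdiscrim : (lam - (xh - xl)) ^ 2 - 4 * -(q * lam * (xh - xl))
      = ((xh - xl) - lam) ^ 2 + 4 * q * (xh - xl) * lam := by ring
  rw [hdiscrim] at hroot
  linear_combination hroot
end

section
/- Let $\Delta x > 0$, $q \in (0,1)$, $\mu \in \mathbb{R}$, and define $f(\lambda) = \mu + \frac{\Delta x (1 - 2q) - \lambda + \sqrt{(\Delta x - \lambda)^2 + 4 q \Delta x \lambda}}{2}$ for $\lambda > 0$. Then $f$ is strictly decreasing in $\lambda$. -/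
/-!
Completing the square, the radicand is `(λ - c)² + k` with `c = Δx (1 - 2q)` and
`k = 4 q (1 - q) Δx² > 0`, so `f(λ) = μ + (√((λ - c)² + k) - (λ - c)) / 2`. The map
`t ↦ √(t² + k) - t = k / (√(t² + k) + t)` is strictly decreasing on all of `ℝ` when `k > 0`.
-/

open Real

lemma lt_sqrt_sq_add {k : ℝ} (hk : 0 < k) (t : ℝ) : t < √(t ^ 2 + k) :=
  calc t ≤ |t| := le_abs_self t
    _ = √(t ^ 2) := (sqrt_sq_eq_abs t).symm
    _ < √(t ^ 2 + k) := sqrt_lt_sqrt (sq_nonneg t) (by linarith)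

lemma strictAnti_sqrt_sq_add_sub {k : ℝ} (hk : 0 < k) :
    StrictAnti fun t : ℝ => √(t ^ 2 + k) - t := by
  intro a b hab
  have hroot := lt_sqrt_sq_add hk a
  have hsq : √(a ^ 2 + k) ^ 2 = a ^ 2 + k := sq_sqrt (by positivity)
  -- Squaring, the claim `√(b² + k) < √(a² + k) + (b - a)` reduces to `a < √(a² + k)`.
  have : √(b ^ 2 + k) < √(a ^ 2 + k) + (b - a) := by
    rw [sqrt_lt' (by linarith [sqrt_nonneg (a ^ 2 + k)])]
    nlinarith [mul_pos (sub_pos.mpr hab) (sub_pos.mpr hroot)]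
  dsimp only
  linarith

/-- The explicit binary-lottery growth rate is strictly decreasing in the
redraw rate. -/
theorem stmt_11 (dx q mu : ℝ) (hdx : 0 < dx) (hq : q ∈ Set.Ioo (0 : ℝ) 1) :
    StrictAntiOn
      (fun lam : ℝ =>
        mu + (dx * (1 - 2 * q) - lam +
          Real.sqrt ((dx - lam) ^ 2 + 4 * q * dx * lam)) / 2)
      (Set.Ioi 0) := by
  set c := dx * (1 - 2 * q)
  set k := 4 * q * (1 - q) * dx ^ 2
  have hk : 0 < k := mul_pos (mul_pos (mul_pos four_pos hq.1) (sub_pos.mpr hq.2)) (pow_pos hdx 2)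
  have hradicand (lam : ℝ) : (dx - lam) ^ 2 + 4 * q * dx * lam = (lam - c) ^ 2 + k := by ring
  intro a _ b _ hab
  have := strictAnti_sqrt_sq_add_sub hk (sub_lt_sub_right hab c)
  simp only [hradicand] at this ⊢
  linarith
end
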